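/- arXiv:2210.03242 — 6 statements merged into one kernel-verified Lean document; each statement's English description precedes it below -/
import Mathlib

section
/- Let $a_1,\ldots,a_k > 0$ with $c = \sum_{j=1}^k a_j$, and let $M_{ij} = c\,\delta_{ij} - a_i$. Suppose $u, v \in \mathbb{R}_{\geq 0}^k$ satisfy $Mu = Mv$, and each of $u$ and $v$ has at least one zero coordinate. Then $u = v$. -/
/-- if u, v are nonnegative vectors each with a zero coordinate and
Mu = Mv for M = cI − a𝟙ᵀ (a > 0, c = ∑ a), then u = v. -/
theorem stmt2 (k : ℕ) (a : Fin k → ℝ) (ha : ∀ i, 0 < a i)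
    (c : ℝ) (hc : c = ∑ j, a j)
    (M : Matrix (Fin k) (Fin k) ℝ)
    (hM : ∀ i j, M i j = (if i = j then c else 0) - a i)
    (u v : Fin k → ℝ)
    (hu : ∀ i, 0 ≤ u i) (hv : ∀ i, 0 ≤ v i)
    (hu0 : ∃ i, u i = 0) (hv0 : ∃ i, v i = 0)
    (heq : M.mulVec u = M.mulVec v) :
    u = v := by
  obtain ⟨p, hp⟩ := hu0
  obtain ⟨q, hq⟩ := hv0
  haveI : Nonempty (Fin k) := ⟨p⟩
  have hc0 : 0 < c := by
    rw [hc]; exact Finset.sum_pos (fun i _ => ha i) Finset.univ_nonempty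
  set S : ℝ := (∑ j, u j) - (∑ j, v j) with hS
  have key : ∀ i, c * (u i - v i) = a i * S := by
    intro i
    have h := congrFun heq i
    simp only [Matrix.mulVec, dotProduct] at h
    have hu' : ∑ j, M i j * u j = c * u i - a i * ∑ j, u j := by
      simp only [hM, sub_mul, Finset.sum_sub_distrib, ite_mul, zero_mul,
        Finset.sum_ite_eq, Finset.mem_univ, if_true, ← Finset.mul_sum]
    have hv' : ∑ j, M i j * v j = c * v i - a i * ∑ j, v j := by
      simp only [hM, sub_mul, Finset.sum_sub_distrib, ite_mul, zero_mul,
        Finset.sum_ite_eq, Finset.mem_univ, if_true, ← Finset.mul_sum]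
    rw [hu', hv'] at h
    rw [hS]; ring_nf; ring_nf at h; linarith
  have hSle : S ≤ 0 := by
    have := key p
    rw [hp] at this
    nlinarith [hv p, ha p, mul_nonneg hc0.le (hv p)]
  have hSge : 0 ≤ S := by
    have := key q
    rw [hq] at this
    nlinarith [hu q, ha q, mul_nonneg hc0.le (hu q)]
  have hS0 : S = 0 := le_antisymm hSle hSge
  funext i
  have := key i
  rw [hS0, mul_zero] at this
  have := mul_eq_zero.mp this
  rcases this with h | h
  · exact absurd h hc0.ne'
  · linarith
end

section
/- Let $a_1,\ldots,a_k > 0$ with $c = \sum_{j=1}^k a_j$, let $M_{ij} = c\,\delta_{ij} - a_i$, and suppose $Mx = b$ has a solution. Then there exists a unique $x \in \mathbb{R}_{\geq 0}^k$ with $Mx = b$ and $x_i = 0$ for some $i \in [k]$. -/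
/-!
Writing `M x = c x - (∑ⱼ xⱼ) a` shows that `M a = 0` (as `c = ∑ⱼ aⱼ`) and that the kernel of `M`
is the line spanned by `a`. Since `a > 0`, translating any solution `x` by `-(minᵢ xᵢ / aᵢ) a`
gives a nonnegative solution with a zero coordinate; and two such solutions differ by `t a`,
where evaluating at the zero coordinate of either one forces `t ≥ 0` and `t ≤ 0`.
-/

open Finset Matrix

section Kernel

variable {ι K : Type*} [Fintype ι] [DecidableEq ι] [Field K]
  {M : Matrix ι ι K} {a : ι → K} {c : K}

theorem mulVec_eq_smul_sub_sum_smul (hM : ∀ i j, M i j = (if i = j then c else 0) - a i)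
    (x : ι → K) : M *ᵥ x = c • x - (∑ j, x j) • a := by
  ext i
  simp [mulVec, dotProduct, hM, mul_sub, sum_sub_distrib, ← mul_sum, mul_comm]

theorem mulVec_eq_zero_of_eq_sum (hM : ∀ i j, M i j = (if i = j then c else 0) - a i)
    (hc : c = ∑ j, a j) : M *ᵥ a = 0 := by
  rw [mulVec_eq_smul_sub_sum_smul hM, hc, sub_self]

theorem eq_smul_of_mulVec_eq_zero (hM : ∀ i j, M i j = (if i = j then c else 0) - a i)
    (hc : c ≠ 0) {v : ι → K} (hv : M *ᵥ v = 0) : v = (c⁻¹ * ∑ j, v j) • a := by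
  rw [mulVec_eq_smul_sub_sum_smul hM, sub_eq_zero] at hv
  rw [mul_smul, ← hv, inv_smul_smul₀ hc]

end Kernel

section Translate

variable {ι 𝕜 : Type*} [Field 𝕜] [LinearOrder 𝕜] [IsStrictOrderedRing 𝕜]
  {a : ι → 𝕜}

theorem exists_sub_smul_nonneg_and_eq_zero [Fintype ι] [Nonempty ι] (ha : ∀ i, 0 < a i) (x : ι → 𝕜) :
    ∃ t : 𝕜, (∀ i, 0 ≤ (x - t • a) i) ∧ ∃ i, (x - t • a) i = 0 := by
  obtain ⟨i₀, -, hmin⟩ := exists_min_image univ (fun i => x i / a i) univ_nonempty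
  refine ⟨x i₀ / a i₀, fun i => ?_, i₀, ?_⟩
  · have := hmin i (mem_univ i)
    rw [le_div_iff₀ (ha i)] at this
    simpa [sub_nonneg] using this
  · simp [div_mul_cancel₀ _ (ha i₀).ne']

theorem eq_of_sub_eq_smul_of_nonneg_of_eq_zero (ha : ∀ i, 0 < a i) {x y : ι → 𝕜} {t : 𝕜}
    (hx : ∀ i, 0 ≤ x i) (hx₀ : ∃ i, x i = 0) (hy : ∀ i, 0 ≤ y i) (hy₀ : ∃ i, y i = 0)
    (hxy : y - x = t • a) : y = x := by
  have hcoord i : y i = x i + t * a i := by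
    simpa [sub_eq_iff_eq_add'] using congrFun hxy i
  obtain ⟨i, hi⟩ := hx₀
  obtain ⟨j, hj⟩ := hy₀
  have ht_nonneg : 0 ≤ t := by
    have := hy i
    rw [hcoord, hi, zero_add] at this
    exact nonneg_of_mul_nonneg_left this (ha i)
  have ht_nonpos : t ≤ 0 := by
    have := hx j
    rw [← hj, hcoord, add_le_iff_nonpos_right] at this
    exact nonpos_of_mul_nonpos_left this (ha j)
  rw [← sub_eq_zero, hxy, le_antisymm ht_nonpos ht_nonneg, zero_smul]

end Translate

/-- Lemma 1: assuming Mx = b is solvable, there is a unique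
nonnegative solution having at least one zero coordinate. -/
theorem stmt4 (k : ℕ) (hk : 0 < k) (a : Fin k → ℝ) (ha : ∀ i, 0 < a i)
    (c : ℝ) (hc : c = ∑ j, a j)
    (M : Matrix (Fin k) (Fin k) ℝ)
    (hM : ∀ i j, M i j = (if i = j then c else 0) - a i)
    (b : Fin k → ℝ) (hb : ∃ x, M.mulVec x = b) :
    ∃! x : Fin k → ℝ, (∀ i, 0 ≤ x i) ∧ (∃ i, x i = 0) ∧ M.mulVec x = b := by
  have : Nonempty (Fin k) := ⟨⟨0, hk⟩⟩
  have hc₀ : c ≠ 0 := hc ▸ (sum_pos (fun i _ => ha i) univ_nonempty).ne'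
  obtain ⟨x₀, rfl⟩ := hb
  obtain ⟨t, hnonneg, hzero⟩ := exists_sub_smul_nonneg_and_eq_zero ha x₀
  have hsol : M *ᵥ (x₀ - t • a) = M *ᵥ x₀ := by
    rw [mulVec_sub, mulVec_smul, mulVec_eq_zero_of_eq_sum hM hc, smul_zero, sub_zero]
  refine ⟨x₀ - t • a, ⟨hnonneg, hzero, hsol⟩, fun y ⟨hy, hy₀, hMy⟩ => ?_⟩
  have hker : M *ᵥ (y - (x₀ - t • a)) = 0 := by rw [mulVec_sub, hMy, hsol, sub_self]
  exact eq_of_sub_eq_smul_of_nonneg_of_eq_zero ha hnonneg hzero hy hy₀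
    (eq_smul_of_mulVec_eq_zero hM hc₀ hker)
end

section
/- Let $V$ be a finite set of values with $|V| = k$, let $p : V \to \mathbb{R}_{>0}$ be a probability mass function with $\sum_v p(v) = 1$, and for $v^* \in V$ let $\delta_{v^*}$ denote the point mass at $v^*$. If two mixtures $\pi_0 p + \sum_{v} \pi_v \delta_v = \mu_0 p + \sum_v \mu_v \delta_v$ agree as functions on $V$, where all weights are nonnegative, $\pi_0 + \sum_v \pi_v = 1 = \mu_0 + \sum_v \mu_v$, and there exist $v_1, v_2 \in V$ with $\pi_{v_1} = 0$ and $\mu_{v_2} = 0$, then $\pi_0 = \mu_0$ and $\pi_v = \mu_v$ for all $v \in V$. -/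
/-- base case: mixtures of a strictly positive pmf with point masses
on a finite set are uniquely determined when each representation excludes some value. -/
theorem stmt5 (V : Type*) [Fintype V] [DecidableEq V] (k : ℕ) (hk : Fintype.card V = k)
    (p : V → ℝ) (hp : ∀ v, 0 < p v) (hsum : ∑ v, p v = 1)
    (π0 μ0 : ℝ) (π μ : V → ℝ)
    (hπ0 : 0 ≤ π0) (hμ0 : 0 ≤ μ0) (hπ : ∀ v, 0 ≤ π v) (hμ : ∀ v, 0 ≤ μ v)
    (hπs : π0 + ∑ v, π v = 1) (hμs : μ0 + ∑ v, μ v = 1)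
    (hv1 : ∃ v1, π v1 = 0) (hv2 : ∃ v2, μ v2 = 0)
    (heq : ∀ x, π0 * p x + ∑ v, π v * (if x = v then 1 else 0)
        = μ0 * p x + ∑ v, μ v * (if x = v then 1 else 0)) :
    π0 = μ0 ∧ ∀ v, π v = μ v := by
  have key : ∀ x, π0 * p x + π x = μ0 * p x + μ x := by
    intro x
    have h := heq x
    simpa [mul_ite, Finset.sum_ite_eq, mul_one, mul_zero] using h
  have h0 : π0 = μ0 := by
    by_contra hne
    rcases lt_or_gt_of_ne hne with h | h
    · obtain ⟨v1, hv1'⟩ := hv1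
      have := key v1
      rw [hv1'] at this
      nlinarith [hp v1, hμ v1]
    · obtain ⟨v2, hv2'⟩ := hv2
      have := key v2
      rw [hv2'] at this
      nlinarith [hp v2, hπ v2]
  refine ⟨h0, fun v => ?_⟩
  have := key v
  rw [h0] at this
  linarith
end

section
/- Let $\Omega = \prod_{i=1}^n C_i$ with the $n$-th node last in topological order, let $P_T$ denote the interventional distribution for target $T$ (fixing a subset of coordinates to given values and using the truncated factorization for the rest). If target $t$ does not involve coordinate $n$, then $\sum_{v \in C_n} P_t(v_1,\ldots,v_{n-1}, v) = Q_t(v_1,\ldots,v_{n-1})$, where $Q_t$ is the interventional distribution with target $t$ on the marginal Bayesian network over the first $n-1$ nodes; and if the target is $t \cup \{V_n = v^j\}$, then $\sum_{v \in C_n} P_{t \cup \{V_n=v^j\}}(v_1,\ldots,v_{n-1},v) = Q_t(v_1,\ldots,v_{n-1})$. -/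
/-- marginalization identity for interventional distributions:
summing the truncated-factorization interventional distribution over the last node
yields the interventional distribution on the marginal Bayesian network, both when
the target does not involve the last node and when the last node is added to the
target with a fixed value. -/
theorem stmt12 (n : ℕ) (C : Fin (n + 1) → Type*) [∀ i, Fintype (C i)]
    [∀ i, DecidableEq (C i)]
    (pa : Fin (n + 1) → Finset (Fin (n + 1))) (hpa : ∀ i j, j ∈ pa i → j < i)
    (cond : (i : Fin (n + 1)) → (∀ j, C j) → ℝ)
    (hdep : ∀ i (v w : ∀ j, C j), v i = w i → (∀ j ∈ pa i, v j = w j) →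
      cond i v = cond i w)
    (hnn : ∀ i v, 0 ≤ cond i v)
    (hnorm : ∀ i (v : ∀ j, C j), ∑ x : C i, cond i (Function.update v i x) = 1)
    (T : Finset (Fin (n + 1))) (hT : Fin.last n ∉ T) (t : ∀ j, C j)
    (vj : C (Fin.last n)) :
    (∀ v : ∀ j, C j,
      ∑ x : C (Fin.last n),
        ∏ i, (if i ∈ T then (if Function.update v (Fin.last n) x i = t i then (1 : ℝ) else 0)
              else cond i (Function.update v (Fin.last n) x))
      = ∏ i ∈ Finset.univ.erase (Fin.last n),
          (if i ∈ T then (if v i = t i then (1 : ℝ) else 0) else cond i v)) ∧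
    (∀ v : ∀ j, C j,
      ∑ x : C (Fin.last n),
        ∏ i, (if i ∈ insert (Fin.last n) T then
                (if Function.update v (Fin.last n) x i
                    = Function.update t (Fin.last n) vj i then (1 : ℝ) else 0)
              else cond i (Function.update v (Fin.last n) x))
      = ∏ i ∈ Finset.univ.erase (Fin.last n),
          (if i ∈ T then (if v i = t i then (1 : ℝ) else 0) else cond i v)) := by
  have hcond : ∀ (v : ∀ j, C j) (x : C (Fin.last n)) (i : Fin (n + 1)), i ≠ Fin.last n →
      cond i (Function.update v (Fin.last n) x) = cond i v := by
    intro v x i hi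
    apply hdep
    · exact Function.update_of_ne hi _ _
    · intro j hj
      have hji : j < i := hpa i j hj
      have hjl : j ≠ Fin.last n := by
        intro h
        exact absurd (h ▸ hji) (not_lt.mpr (Fin.le_last i))
      exact Function.update_of_ne hjl _ _
  constructor
  · intro v
    have key : ∀ x : C (Fin.last n),
        (∏ i, (if i ∈ T then (if Function.update v (Fin.last n) x i = t i then (1 : ℝ) else 0)
              else cond i (Function.update v (Fin.last n) x)))
        = cond (Fin.last n) (Function.update v (Fin.last n) x) *
          ∏ i ∈ Finset.univ.erase (Fin.last n),
            (if i ∈ T then (if v i = t i then (1 : ℝ) else 0) else cond i v) := by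
      intro x
      rw [← Finset.mul_prod_erase Finset.univ _ (Finset.mem_univ (Fin.last n))]
      congr 1
      · simp [hT]
      · apply Finset.prod_congr rfl
        intro i hi
        have hi' : i ≠ Fin.last n := (Finset.mem_erase.mp hi).1
        rw [Function.update_of_ne hi', hcond v x i hi']
    simp only [key]
    rw [← Finset.sum_mul, hnorm, one_mul]
  · intro v
    have key : ∀ x : C (Fin.last n),
        (∏ i, (if i ∈ insert (Fin.last n) T then
                (if Function.update v (Fin.last n) x i
                    = Function.update t (Fin.last n) vj i then (1 : ℝ) else 0)
              else cond i (Function.update v (Fin.last n) x)))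
        = (if x = vj then (1 : ℝ) else 0) *
          ∏ i ∈ Finset.univ.erase (Fin.last n),
            (if i ∈ T then (if v i = t i then (1 : ℝ) else 0) else cond i v) := by
      intro x
      rw [← Finset.mul_prod_erase Finset.univ _ (Finset.mem_univ (Fin.last n))]
      congr 1
      · simp
      · apply Finset.prod_congr rfl
        intro i hi
        have hi' : i ≠ Fin.last n := (Finset.mem_erase.mp hi).1
        rw [Function.update_of_ne hi', Function.update_of_ne hi', hcond v x i hi']
        simp [Finset.mem_insert, hi']
    simp only [key]
    rw [← Finset.sum_mul]
    simp
end

section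
/- Let $\Omega = \prod_{i=1}^n C_i$ and let $P_{\text{mix}} = \sum_{i=1}^m \pi_i P_{t_i}$ be a finite mixture of interventional distributions on a Bayesian network with node $n$ last in topological order, with $\pi_i > 0$. Then the marginal $\sum_{v \in C_n} P_{\text{mix}}(\cdot, v)$ on the first $n-1$ coordinates is itself a finite mixture of interventional distributions on the marginal Bayesian network, with targets obtained from the $t_i$ by removing any assignment to node $n$, and with weights obtained by summing $\pi_i$ over targets that project to the same reduced target. -/
/-!
Since the last node is a sink, summing it out of one interventional distribution leaves the
factors of the other nodes untouched, and its own factor sums to one: by normalization if it is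
not intervened on, as a point mass if it is. So each component marginalizes to the
interventional distribution of the marginal network for the reduced target, and grouping the
components by reduced target (encoded as a partial assignment) gives the weights.
-/

open Finset Function

theorem cond_update_eq_of_notMem_parents {ι : Type*} [DecidableEq ι] {C : ι → Type*}
    {pa : ι → Finset ι} {cond : (i : ι) → (∀ j, C j) → ℝ}
    (hdep : ∀ i (v w : ∀ j, C j), v i = w i → (∀ j ∈ pa i, v j = w j) →
      cond i v = cond i w)
    {i L : ι} (hi : i ≠ L) (hL : L ∉ pa i) (v : ∀ j, C j) (x : C L) :
    cond i (update v L x) = cond i v :=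
  hdep i _ _ (update_of_ne hi x v) fun _ hj => update_of_ne (ne_of_mem_of_not_mem hj hL) x v

section TruncatedFactorization

variable {ι : Type*} [DecidableEq ι] {C : ι → Type*} [∀ i, DecidableEq (C i)]

/-- The do-operator truncated factorization `P_{T,t}`, restricted to the nodes `U`. -/
def truncatedFactorization (cond : (i : ι) → (∀ j, C j) → ℝ) (U T : Finset ι)
    (t v : ∀ j, C j) : ℝ :=
  ∏ j ∈ U, if j ∈ T then (if v j = t j then 1 else 0) else cond j v

theorem truncatedFactorization_congr_target (cond : (i : ι) → (∀ j, C j) → ℝ)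
    (U T : Finset ι) {t t' : ∀ j, C j} (h : ∀ l ∈ T, t l = t' l) (v : ∀ j, C j) :
    truncatedFactorization cond U T t v = truncatedFactorization cond U T t' v :=
  prod_congr rfl fun j _ => by by_cases hj : j ∈ T <;> simp [hj, h j]

variable {pa : ι → Finset ι} {cond : (i : ι) → (∀ j, C j) → ℝ}

theorem truncatedFactorization_update_of_sink [Fintype ι]
    (hdep : ∀ i (v w : ∀ j, C j), v i = w i → (∀ j ∈ pa i, v j = w j) →
      cond i v = cond i w)
    {L : ι} (hL : ∀ i, L ∉ pa i) (T : Finset ι) (t v : ∀ j, C j) (x : C L) :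
    truncatedFactorization cond univ T t (update v L x) =
      (if L ∈ T then (if x = t L then 1 else 0) else cond L (update v L x)) *
        truncatedFactorization cond (univ.erase L) (T.erase L) t v := by
  rw [truncatedFactorization, ← mul_prod_erase univ _ (mem_univ L)]
  congr 1
  · simp
  · refine prod_congr rfl fun i hi => ?_
    have hiL := ne_of_mem_erase hi
    simp only [mem_erase, hiL, ne_eq, not_false_eq_true, true_and, update_of_ne hiL,
      cond_update_eq_of_notMem_parents hdep hiL (hL i)]

theorem sum_truncatedFactorization_update_of_sink [Fintype ι] {L : ι} [Fintype (C L)]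
    (hdep : ∀ i (v w : ∀ j, C j), v i = w i → (∀ j ∈ pa i, v j = w j) →
      cond i v = cond i w)
    (hnorm : ∀ v : ∀ j, C j, ∑ x : C L, cond L (update v L x) = 1)
    (hL : ∀ i, L ∉ pa i) (T : Finset ι) (t v : ∀ j, C j) :
    ∑ x : C L, truncatedFactorization cond univ T t (update v L x) =
      truncatedFactorization cond (univ.erase L) (T.erase L) t v := by
  simp_rw [truncatedFactorization_update_of_sink hdep hL, ← sum_mul]
  split_ifs
  · simp
  · rw [hnorm, one_mul]

end TruncatedFactorization

def partialAssignment {ι : Type*} [DecidableEq ι] {C : ι → Type*} (S : Finset ι)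
    (t : ∀ j, C j) : ∀ j, Option (C j) :=
  fun j => if j ∈ S then some (t j) else none

theorem partialAssignment_eq_iff {ι : Type*} [DecidableEq ι] {C : ι → Type*}
    {S S' : Finset ι} {t t' : ∀ j, C j} :
    partialAssignment S t = partialAssignment S' t' ↔ S = S' ∧ ∀ l ∈ S', t l = t' l := by
  constructor
  · intro h
    have hS : S = S' := by
      ext l
      have := congrFun h l
      simp only [partialAssignment] at this
      split_ifs at this <;> simp_all
    refine ⟨hS, fun l hl => ?_⟩
    simpa [partialAssignment, hS, hl] using congrFun h l
  · rintro ⟨rfl, h⟩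
    funext l
    by_cases hl : l ∈ S <;> simp [partialAssignment, hl, h l]

theorem exists_fin_sum_eq_sum_fiberwise {ι α M : Type*} [Fintype ι] [DecidableEq α]
    [AddCommMonoid M] (key : ι → α) :
    ∃ (m : ℕ) (r : Fin m → ι), ∀ f : ι → M,
      ∑ i, f i = ∑ k, ∑ i ∈ univ.filter (fun i => key i = key (r k)), f i := by
  set K := univ.image key
  have hK : ∀ a : K, ∃ i, key i = a := fun a => (mem_image.1 a.2).imp fun _ h => h.2
  choose r hr using hK
  refine ⟨K.card, fun k => r (K.equivFin.symm k), fun f => ?_⟩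
  rw [← sum_fiberwise_of_maps_to (g := key) (t := K) fun i _ => mem_image_of_mem key (mem_univ i),
    ← sum_coe_sort K, ← K.equivFin.symm.sum_comp]
  simp_rw [hr]

theorem stmt13_general (n : ℕ) (C : Fin (n + 1) → Type*) [∀ i, Fintype (C i)]
    [∀ i, DecidableEq (C i)]
    (pa : Fin (n + 1) → Finset (Fin (n + 1))) (hpa : ∀ i j, j ∈ pa i → j < i)
    (cond : (i : Fin (n + 1)) → (∀ j, C j) → ℝ)
    (hdep : ∀ i (v w : ∀ j, C j), v i = w i → (∀ j ∈ pa i, v j = w j) →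
      cond i v = cond i w)
    (hnorm : ∀ i (v : ∀ j, C j), ∑ x : C i, cond i (Function.update v i x) = 1)
    (m : ℕ) (T : Fin m → Finset (Fin (n + 1))) (t : Fin m → ∀ j, C j)
    (π : Fin m → ℝ) (hπ : ∀ i, 0 < π i) :
    ∃ (m' : ℕ) (S : Fin m' → Finset (Fin (n + 1))) (s : Fin m' → ∀ j, C j)
      (μ : Fin m' → ℝ),
      (∀ i, 0 < μ i) ∧
      (∀ i, Fin.last n ∉ S i) ∧
      (∀ i, ∃ j, S i = (T j).erase (Fin.last n) ∧ ∀ l ∈ S i, s i l = t j l) ∧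
      (∀ i, μ i = ∑ j ∈ Finset.univ.filter
          (fun j => (T j).erase (Fin.last n) = S i ∧ ∀ l ∈ S i, t j l = s i l), π j) ∧
      ∀ v : ∀ j, C j,
        ∑ x : C (Fin.last n),
          ∑ i, π i *
            ∏ j', (if j' ∈ T i then
                    (if Function.update v (Fin.last n) x j' = t i j' then (1 : ℝ) else 0)
                  else cond j' (Function.update v (Fin.last n) x))
        = ∑ i, μ i * ∏ j' ∈ Finset.univ.erase (Fin.last n),
            (if j' ∈ S i then (if v j' = s i j' then (1 : ℝ) else 0)
             else cond j' v) := by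
  set L := Fin.last n
  have hsink : ∀ i, L ∉ pa i := fun i hL => (Fin.le_last i).not_gt (hpa i L hL)
  obtain ⟨m', r, hsum⟩ :=
    exists_fin_sum_eq_sum_fiberwise (M := ℝ) fun i => partialAssignment ((T i).erase L) (t i)
  refine ⟨m', fun k => (T (r k)).erase L, fun k => t (r k),
    fun k => ∑ j ∈ univ.filter fun j => (T j).erase L = (T (r k)).erase L ∧
      ∀ l ∈ (T (r k)).erase L, t j l = t (r k) l, π j,
    fun k => sum_pos (fun j _ => hπ j) ⟨r k, by simp⟩, fun k => notMem_erase _ _,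
    fun k => ⟨r k, rfl, fun _ _ => rfl⟩, fun k => rfl, fun v => ?_⟩
  show ∑ x, ∑ i, π i * truncatedFactorization cond univ (T i) (t i) (update v L x) =
    ∑ k, _ * truncatedFactorization cond (univ.erase L) ((T (r k)).erase L) (t (r k)) v
  rw [sum_comm]
  simp_rw [← mul_sum, sum_truncatedFactorization_update_of_sink hdep (hnorm L) hsink]
  rw [hsum]
  refine sum_congr rfl fun k _ => ?_
  rw [sum_mul]
  refine sum_congr (filter_congr fun j _ => partialAssignment_eq_iff) fun j hj => ?_
  obtain ⟨hT, ht⟩ := (mem_filter.1 hj).2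
  rw [hT, truncatedFactorization_congr_target _ _ _ ht]

/-- Lemma 2, part 2: the marginal of a mixture of interventional
distributions is a mixture of interventional distributions on the marginal network,
with targets obtained by deleting any assignment to the last node and weights
obtained by summing the weights of targets projecting to the same reduced target. -/
theorem stmt13 (n : ℕ) (C : Fin (n + 1) → Type*) [∀ i, Fintype (C i)]
    [∀ i, DecidableEq (C i)]
    (pa : Fin (n + 1) → Finset (Fin (n + 1))) (hpa : ∀ i j, j ∈ pa i → j < i)
    (cond : (i : Fin (n + 1)) → (∀ j, C j) → ℝ)
    (hdep : ∀ i (v w : ∀ j, C j), v i = w i → (∀ j ∈ pa i, v j = w j) →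
      cond i v = cond i w)
    (hnn : ∀ i v, 0 ≤ cond i v)
    (hnorm : ∀ i (v : ∀ j, C j), ∑ x : C i, cond i (Function.update v i x) = 1)
    (m : ℕ) (T : Fin m → Finset (Fin (n + 1))) (t : Fin m → ∀ j, C j)
    (π : Fin m → ℝ) (hπ : ∀ i, 0 < π i) :
    ∃ (m' : ℕ) (S : Fin m' → Finset (Fin (n + 1))) (s : Fin m' → ∀ j, C j)
      (μ : Fin m' → ℝ),
      (∀ i, 0 < μ i) ∧
      (∀ i, Fin.last n ∉ S i) ∧
      (∀ i, ∃ j, S i = (T j).erase (Fin.last n) ∧ ∀ l ∈ S i, s i l = t j l) ∧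
      (∀ i, μ i = ∑ j ∈ Finset.univ.filter
          (fun j => (T j).erase (Fin.last n) = S i ∧ ∀ l ∈ S i, t j l = s i l), π j) ∧
      ∀ v : ∀ j, C j,
        ∑ x : C (Fin.last n),
          ∑ i, π i *
            ∏ j', (if j' ∈ T i then
                    (if Function.update v (Fin.last n) x j' = t i j' then (1 : ℝ) else 0)
                  else cond j' (Function.update v (Fin.last n) x))
        = ∑ i, μ i * ∏ j' ∈ Finset.univ.erase (Fin.last n),
            (if j' ∈ S i then (if v j' = s i j' then (1 : ℝ) else 0)
             else cond j' v) :=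
  stmt13_general n C pa hpa cond hdep hnorm m T t π hπ
end

section
/- Let $a \in \mathbb{R}_{>0}^k$, $c = \sum_i a_i$, and $M = cI - a\mathbf{1}^T$. Then for any $b$ in the column space of $M$, and any index $i \in [k]$, the system $Mx = b$ together with the constraint $x_i = 0$ has a unique solution $x^{(i)} \in \mathbb{R}^k$; moreover, among the $k$ vectors $x^{(1)},\ldots,x^{(k)}$, at least one has all coordinates nonnegative. -/
/-- for each index i, the system Mx = b with x i = 0 has a unique
solution, and among these k solutions at least one is nonnegative. -/
theorem stmt16 (k : ℕ) (hk : 0 < k) (a : Fin k → ℝ) (ha : ∀ i, 0 < a i)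
    (c : ℝ) (hc : c = ∑ i, a i)
    (M : Matrix (Fin k) (Fin k) ℝ)
    (hM : ∀ i j, M i j = (if i = j then c else 0) - a i)
    (b : Fin k → ℝ) (hb : ∃ x, M.mulVec x = b) :
    (∀ i : Fin k, ∃! x : Fin k → ℝ, M.mulVec x = b ∧ x i = 0) ∧
    (∃ (i : Fin k) (x : Fin k → ℝ), M.mulVec x = b ∧ x i = 0 ∧ ∀ j, 0 ≤ x j) := by
  haveI : Nonempty (Fin k) := ⟨⟨0, hk⟩⟩
  have hcpos : 0 < c := by
    rw [hc]
    exact Finset.sum_pos (fun i _ => ha i) Finset.univ_nonempty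
  have hMx : ∀ (x : Fin k → ℝ) (i : Fin k),
      M.mulVec x i = c * x i - a i * ∑ j, x j := by
    intro x i
    simp only [Matrix.mulVec, dotProduct, hM, sub_mul, ite_mul, zero_mul,
      Finset.sum_sub_distrib, Finset.sum_ite_eq, Finset.mem_univ, if_true,
      ← Finset.mul_sum]
  obtain ⟨x₀, hx₀⟩ := hb
  -- the shifted solutions
  have hsol : ∀ t : ℝ, M.mulVec (fun j => x₀ j - t * a j) = b := by
    intro t
    funext j
    rw [hMx]
    have h0 := hx₀ ▸ (hMx x₀ j)
    have hsum : ∑ j, (x₀ j - t * a j) = (∑ j, x₀ j) - t * c := by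
      rw [Finset.sum_sub_distrib, ← Finset.mul_sum, hc]
    rw [hsum]
    have : M.mulVec x₀ j = c * x₀ j - a j * ∑ j, x₀ j := hMx x₀ j
    rw [hx₀] at this
    linear_combination -this
  constructor
  · intro i
    have hz : x₀ i - x₀ i / a i * a i = 0 := by
      rw [div_mul_cancel₀ _ (ha i).ne', sub_self]
    refine ⟨fun j => x₀ j - (x₀ i / a i) * a j, ⟨hsol _, hz⟩, ?_⟩
    · rintro y ⟨hy, hyi⟩
      -- uniqueness
      have key : ∀ x : Fin k → ℝ, M.mulVec x = b →
          ∀ j, c * x j - a j * ∑ l, x l = b j := by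
        intro x hx j
        rw [← hMx, hx]
      have h1 := key y hy
      have h2 := key _ (hsol (x₀ i / a i))
      have hS : ∑ l, y l = ∑ l, (x₀ l - (x₀ i / a i) * a l) := by
        have e1 := h1 i
        have e2 := h2 i
        rw [hyi] at e1
        rw [hz] at e2
        have : a i * ∑ l, y l = a i * ∑ l, (x₀ l - x₀ i / a i * a l) := by linarith
        exact mul_left_cancel₀ (ne_of_gt (ha i)) this
      funext j
      have e1 := h1 j
      have e2 := h2 j
      rw [hS] at e1
      have : c * y j = c * (x₀ j - x₀ i / a i * a j) := by linarith
      exact mul_left_cancel₀ (ne_of_gt hcpos) this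
  · obtain ⟨i, hi⟩ := Finite.exists_min (fun j => x₀ j / a j)
    refine ⟨i, fun j => x₀ j - (x₀ i / a i) * a j, hsol _, ?_, ?_⟩
    · show x₀ i - x₀ i / a i * a i = 0
      rw [div_mul_cancel₀ _ (ha i).ne', sub_self]
    intro j
    have := hi j
    have haj := ha j
    have hai := ha i
    rw [div_le_div_iff₀ hai haj] at this
    rw [sub_nonneg, div_mul_eq_mul_div, div_le_iff₀ hai]
    linarith
end
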